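/- arXiv:1404.7019 — 5 statements merged into one kernel-verified Lean document; each statement's English description precedes it below -/
import Mathlib

section
/- Let K be a convex body of constant width 1 in ℝⁿ, let u be a unit vector and t a unit vector orthogonal to u. Define, for unit vectors w with ⟨w,t⟩ > 0, the quotient q(w) = (h(K,w) − ⟨x_K(u), w⟩)/(1 − ⟨u,w⟩). Then the upper tangential radius of curvature ρ̄_s(K,u,t) := limsup_{w→u, ⟨w,t⟩>0} q(w) satisfies 0 ≤ ρ̄_s(K,u,t) ≤ 1. -/
open scoped RealInnerProductSpace
open Metric Filter

noncomputable def supp {n : ℕ} (K : Set (EuclideanSpace ℝ (Fin n)))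
    (u : EuclideanSpace ℝ (Fin n)) : ℝ :=
  sSup ((fun x => ⟪x, u⟫) '' K)

theorem upper_tangential_radius_between_zero_and_one {n : ℕ}
    (K : Set (EuclideanSpace ℝ (Fin n)))
    (hKc : IsCompact K) (hKconv : Convex ℝ K) (hKne : K.Nonempty)
    (hwidth : ∀ v : EuclideanSpace ℝ (Fin n), ‖v‖ = 1 → supp K v + supp K (-v) = 1)
    (u t x : EuclideanSpace ℝ (Fin n)) (hu : ‖u‖ = 1) (ht : ‖t‖ = 1)
    (hut : ⟪u, t⟫ = 0) (hxK : x ∈ K) (hx : ⟪x, u⟫ = supp K u) :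
    0 ≤ Filter.limsup (fun w => (supp K w - ⟪x, w⟫) / (1 - ⟪u, w⟫))
        (nhdsWithin u {w : EuclideanSpace ℝ (Fin n) | ‖w‖ = 1 ∧ 0 < ⟪w, t⟫}) ∧
    Filter.limsup (fun w => (supp K w - ⟪x, w⟫) / (1 - ⟪u, w⟫))
        (nhdsWithin u {w : EuclideanSpace ℝ (Fin n) | ‖w‖ = 1 ∧ 0 < ⟪w, t⟫}) ≤ 1 := by
  set S : Set (EuclideanSpace ℝ (Fin n)) := {w | ‖w‖ = 1 ∧ 0 < ⟪w, t⟫} with hS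
  set q : EuclideanSpace ℝ (Fin n) → ℝ :=
    fun w => (supp K w - ⟪x, w⟫) / (1 - ⟪u, w⟫) with hq
  -- continuity of inner with fixed second argument
  have hcont : ∀ w : EuclideanSpace ℝ (Fin n),
      Continuous (fun z : EuclideanSpace ℝ (Fin n) => ⟪z, w⟫) :=
    fun w => continuous_id.inner continuous_const
  -- basic facts about supp
  have hbdd : ∀ w, BddAbove ((fun z => ⟪z, w⟫) '' K) :=
    fun w => (hKc.image (hcont w)).bddAbove
  have hle : ∀ w, ∀ z ∈ K, ⟪z, w⟫ ≤ supp K w :=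
    fun w z hz => le_csSup (hbdd w) ⟨z, hz, rfl⟩
  have hmax : ∀ w, ∃ y ∈ K, supp K w = ⟪y, w⟫ := by
    intro w
    obtain ⟨y, hyK, hy⟩ := hKc.exists_isMaxOn hKne ((hcont w).continuousOn)
    refine ⟨y, hyK, le_antisymm (csSup_le (hKne.image _) ?_) (hle w y hyK)⟩
    rintro a ⟨z, hzK, rfl⟩
    exact hy hzK
  -- diameter bound
  have hdiam : ∀ y ∈ K, ∀ z ∈ K, ‖y - z‖ ≤ 1 := by
    intro y hy z hz
    rcases eq_or_ne y z with rfl | hne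
    · simp
    have hnorm : ‖y - z‖ ≠ 0 := by simpa [sub_eq_zero] using hne
    set v : EuclideanSpace ℝ (Fin n) := ‖y - z‖⁻¹ • (y - z) with hv
    have hv1 : ‖v‖ = 1 := by
      rw [hv, norm_smul, norm_inv, norm_norm, inv_mul_cancel₀ hnorm]
    have h1 := hle v y hy
    have h2 := hle (-v) z hz
    have hw := hwidth v hv1
    have hsum : ⟪y, v⟫ + ⟪z, -v⟫ ≤ 1 := by linarith
    have : ⟪y - z, v⟫ = ‖y - z‖ := by
      rw [hv, real_inner_smul_right, real_inner_self_eq_norm_sq]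
      field_simp
    rw [inner_neg_right, inner_sub_left] at *
    linarith
  -- x - u ∈ K
  have hxu : x - u ∈ K := by
    obtain ⟨z, hzK, hz⟩ := hmax (-u)
    have hwu := hwidth u hu
    have hinner : ⟪x - z, u⟫ = 1 := by
      have : ⟪z, -u⟫ = supp K (-u) := hz.symm
      rw [inner_neg_right] at this
      rw [inner_sub_left]
      linarith
    have hnle : ‖x - z‖ ≤ 1 := hdiam x hxK z hzK
    have hcs : ⟪x - z, u⟫ ≤ ‖x - z‖ * ‖u‖ := real_inner_le_norm _ _
    have hn1 : ‖x - z‖ = 1 := by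
      rw [hu, mul_one] at hcs; linarith
    have heq : ⟪x - z, u⟫ = ‖x - z‖ * ‖u‖ := by rw [hn1, hu]; linarith
    have := inner_eq_norm_mul_iff_real.mp heq
    rw [hu, hn1, one_smul, one_smul] at this
    have hz2 : z = x - u := by rw [this.symm]; abel
    rwa [← hz2]
  -- upper bound for numerator, for unit w
  have hnum : ∀ w : EuclideanSpace ℝ (Fin n), ‖w‖ = 1 →
      supp K w - ⟪x, w⟫ ≤ 1 - ⟪u, w⟫ := by
    intro w hw1
    obtain ⟨y, hyK, hy⟩ := hmax w
    have hcs : ⟪y - (x - u), w⟫ ≤ ‖y - (x - u)‖ * ‖w‖ := real_inner_le_norm _ _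
    have hd : ‖y - (x - u)‖ ≤ 1 := hdiam y hyK (x - u) hxu
    have hexp : ⟪y - (x - u), w⟫ = ⟪y, w⟫ - ⟪x, w⟫ + ⟪u, w⟫ := by
      rw [inner_sub_left, inner_sub_left]; ring
    have hcs' : ⟪y - (x - u), w⟫ ≤ 1 := by
      rw [hw1, mul_one] at hcs
      linarith
    rw [hexp] at hcs'
    have huw : ⟪u, w⟫ = ⟪w, u⟫ := real_inner_comm w u
    linarith [hy]
  -- pointwise bounds on S
  have hbound : ∀ w ∈ S, 0 ≤ q w ∧ q w ≤ 1 := by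
    intro w hw
    obtain ⟨hw1, hwt⟩ := hw
    have hwne : w ≠ u := by
      intro h; rw [h] at hwt; rw [hut] at hwt; exact lt_irrefl 0 hwt
    have huwlt : ⟪u, w⟫ < 1 := by
      have hcs : ⟪u, w⟫ ≤ ‖u‖ * ‖w‖ := real_inner_le_norm _ _
      rw [hu, hw1, mul_one] at hcs
      rcases lt_or_eq_of_le hcs with h | h
      · exact h
      · exact absurd ((inner_eq_one_iff_of_norm_eq_one hu hw1).mp h) (Ne.symm hwne)
    have hden : 0 < 1 - ⟪u, w⟫ := by linarith
    constructor
    · exact div_nonneg (by linarith [hle w x hxK]) hden.le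
    · rw [div_le_one hden]
      exact hnum w hw1
  have hev : ∀ᶠ w in nhdsWithin u S, 0 ≤ q w ∧ q w ≤ 1 :=
    eventually_nhdsWithin_of_forall hbound
  by_cases hne : (nhdsWithin u S).NeBot
  · haveI := hne
    constructor
    · refine Filter.le_limsup_of_frequently_le ?_ ?_
      · exact (hev.mono fun w h => h.1).frequently
      · exact ⟨1, hev.mono fun w h => h.2⟩
    · refine Filter.limsup_le_of_le ?_ (hev.mono fun w h => h.2)
      exact Filter.isCoboundedUnder_le_of_eventually_le (nhdsWithin u S)
        (hev.mono fun w h => h.1)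
  · have hb : nhdsWithin u S = ⊥ := not_neBot.mp hne
    have : Filter.limsup q (nhdsWithin u S) = 0 := by
      rw [hb]
      simp only [Filter.limsup, Filter.limsSup, Filter.eventually_bot, Filter.map_bot]
      rw [Set.setOf_true, csInf_of_not_bddBelow (not_bddBelow_univ), Real.sInf_empty]
    rw [this]
    norm_num
end

section
/- Let K be a convex body of constant width 1 in ℝⁿ, u a unit vector, t ⊥ u a unit vector. Define the lower tangential radius of curvature ρ̄_i(K,u,t) := liminf_{w→u, ⟨w,t⟩>0} (h(K,w) − ⟨x_K(u),w⟩)/(1 − ⟨u,w⟩), and the upper tangential radius of curvature ρ̄_s analogously with limsup. Then ρ̄_s(K,u,t) + ρ̄_i(K,−u,−t) = 1. -/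
/-!
A body of constant width 1 has diameter at most 1, so the two support points in the directions
`u` and `-u`, which are at distance `⟪x - y, u⟫ = h(u) + h(-u) = 1` along `u`, satisfy `y = x - u`.
With this and `h(-w) = 1 - h(w)`, the difference quotient at `-w` for `(y, -u)` is exactly
`1` minus the difference quotient at `w` for `(x, u)`. Since `w ↦ -w` maps the approach region
at `u` onto the one at `-u`, the liminf at `-u` is `1` minus the limsup at `u`; this needs the
quotient to be bounded, and it lies in `[0, 1]`.
-/

open scoped RealInnerProductSpace
open Metric Filter
open Topology

section InnerProductSpace

variable {E : Type*} [NormedAddCommGroup E] [InnerProductSpace ℝ E]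

theorem mem_closure_sphere_inter_inner_pos {u t : E} (hu : ‖u‖ = 1) (ht : ‖t‖ = 1)
    (hut : ⟪u, t⟫ = 0) : u ∈ closure {w : E | ‖w‖ = 1 ∧ 0 < ⟪w, t⟫} := by
  let arc : ℝ → E := fun s => Real.cos s • u + Real.sin s • t
  have harc : Continuous arc := by fun_prop
  have hmaps : Set.MapsTo arc (Set.Ioo 0 Real.pi) {w : E | ‖w‖ = 1 ∧ 0 < ⟪w, t⟫} := by
    intro s hs
    have horth : ⟪Real.cos s • u, Real.sin s • t⟫ = 0 := by
      rw [real_inner_smul_left, real_inner_smul_right, hut]; ring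
    have hsq := norm_add_sq_eq_norm_sq_add_norm_sq_real horth
    rw [norm_smul, norm_smul, hu, ht, Real.norm_eq_abs, Real.norm_eq_abs] at hsq
    refine ⟨?_, ?_⟩
    · have : ‖arc s‖ * ‖arc s‖ = 1 := by
        rw [hsq]; simp only [mul_one, abs_mul_abs_self]; nlinarith [Real.cos_sq_add_sin_sq s]
      nlinarith [norm_nonneg (arc s)]
    · simp only [arc, inner_add_left, real_inner_smul_left, hut, real_inner_self_eq_norm_sq, ht]
      simpa using Real.sin_pos_of_pos_of_lt_pi hs.1 hs.2
  have h0 : (0 : ℝ) ∈ closure (Set.Ioo 0 Real.pi) := by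
    rw [closure_Ioo Real.pi_pos.ne]
    exact ⟨le_rfl, Real.pi_pos.le⟩
  simpa [arc] using harc.continuousWithinAt.mem_closure h0 hmaps

end InnerProductSpace

theorem map_neg_nhdsWithin {G : Type*} [TopologicalSpace G] [InvolutiveNeg G] [ContinuousNeg G]
    (u : G) (s : Set G) : map Neg.neg (𝓝[s] u) = 𝓝[-s] (-u) := by
  rw [← Set.image_neg_eq_neg]
  exact (Homeomorph.neg G).isEmbedding.map_nhdsWithin_eq s u

section Support

variable {n : ℕ} {K : Set (EuclideanSpace ℝ (Fin n))}

theorem inner_le_supp (hK : IsCompact K) {z : EuclideanSpace ℝ (Fin n)} (hz : z ∈ K)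
    (w : EuclideanSpace ℝ (Fin n)) : ⟪z, w⟫ ≤ supp K w :=
  le_csSup (hK.image (continuous_id.inner continuous_const :
    Continuous fun z : EuclideanSpace ℝ (Fin n) => ⟪z, w⟫)).bddAbove ⟨z, hz, rfl⟩

/-- Its `limsup`/`liminf` as `w → u` are the upper/lower tangential radii of curvature `ρ̄_s`,
`ρ̄_i` of `K` at the support point `x = x_K(u)`. -/
noncomputable def radiusQuotient (K : Set (EuclideanSpace ℝ (Fin n)))
    (x u w : EuclideanSpace ℝ (Fin n)) : ℝ :=
  (supp K w - ⟪x, w⟫) / (1 - ⟪u, w⟫)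

theorem radiusQuotient_nonneg (hK : IsCompact K) {x u w : EuclideanSpace ℝ (Fin n)} (hx : x ∈ K)
    (hw : 0 ≤ 1 - ⟪u, w⟫) : 0 ≤ radiusQuotient K x u w :=
  div_nonneg (sub_nonneg.mpr (inner_le_supp hK hx w)) hw

end Support

namespace ConstantWidth

variable {n : ℕ} {K : Set (EuclideanSpace ℝ (Fin n))}

section Width

variable (hK : IsCompact K)
  (hwidth : ∀ v : EuclideanSpace ℝ (Fin n), ‖v‖ = 1 → supp K v + supp K (-v) = 1)
include hK hwidth

theorem norm_sub_le_one {z z' : EuclideanSpace ℝ (Fin n)} (hz : z ∈ K) (hz' : z' ∈ K) :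
    ‖z - z'‖ ≤ 1 := by
  rcases eq_or_ne (z - z') 0 with h | h
  · simp [h]
  set v := ‖z - z'‖⁻¹ • (z - z')
  have hv : ‖v‖ = 1 := norm_smul_inv_norm h
  have hdir : ⟪z - z', v⟫ = ‖z - z'‖ := by
    rw [real_inner_smul_right, real_inner_self_eq_norm_sq]
    field_simp [norm_ne_zero_iff.mpr h]
  have h1 := inner_le_supp hK hz v
  have h2 := inner_le_supp hK hz' (-v)
  rw [inner_neg_right] at h2
  linarith [hwidth v hv, inner_sub_left (𝕜 := ℝ) z z' v]

theorem eq_sub_of_supp_eq {u x y : EuclideanSpace ℝ (Fin n)} (hu : ‖u‖ = 1)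
    (hxK : x ∈ K) (hx : ⟪x, u⟫ = supp K u) (hyK : y ∈ K) (hy : ⟪y, -u⟫ = supp K (-u)) :
    y = x - u := by
  have hxy : ⟪x - y, u⟫ = 1 := by
    rw [inner_sub_left, hx, ← neg_neg ⟪y, u⟫, ← inner_neg_right, hy, sub_neg_eq_add,
      hwidth u hu]
  have hdiam := norm_sub_le_one hK hwidth hxK hyK
  have hzero : ‖x - y - u‖ ^ 2 ≤ 0 := by
    rw [norm_sub_sq_real, hxy, hu]
    nlinarith [norm_nonneg (x - y)]
  have : x - y - u = 0 := norm_eq_zero.mp (by nlinarith [norm_nonneg (x - y - u)])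
  rw [sub_sub, sub_eq_zero] at this
  exact eq_sub_of_add_eq this.symm

end Width

theorem radiusQuotient_le_one (hK : IsCompact K)
    (hwidth : ∀ v : EuclideanSpace ℝ (Fin n), ‖v‖ = 1 → supp K v + supp K (-v) = 1)
    {x u w : EuclideanSpace ℝ (Fin n)} (hxu : x - u ∈ K) (hw : ‖w‖ = 1)
    (hden : 0 ≤ 1 - ⟪u, w⟫) : radiusQuotient K x u w ≤ 1 := by
  have h := inner_le_supp hK hxu (-w)
  rw [inner_neg_right, inner_sub_left] at h
  exact div_le_one_of_le₀ (by linarith [hwidth w hw]) hden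

theorem radiusQuotient_neg
    (hwidth : ∀ v : EuclideanSpace ℝ (Fin n), ‖v‖ = 1 → supp K v + supp K (-v) = 1)
    {x u w : EuclideanSpace ℝ (Fin n)} (hw : ‖w‖ = 1) (hden : 1 - ⟪u, w⟫ ≠ 0) :
    radiusQuotient K (x - u) (-u) (-w) = 1 - radiusQuotient K x u w := by
  have hsupp : supp K (-w) = 1 - supp K w := by linarith [hwidth w hw]
  unfold radiusQuotient
  rw [inner_neg_neg, hsupp, inner_neg_right, inner_sub_left]
  field_simp
  ring

end ConstantWidth

open ConstantWidth in
theorem tangential_radii_sum_one_general {n : ℕ} (K : Set (EuclideanSpace ℝ (Fin n)))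
    (hKc : IsCompact K)
    (hwidth : ∀ v : EuclideanSpace ℝ (Fin n), ‖v‖ = 1 → supp K v + supp K (-v) = 1)
    (u t x y : EuclideanSpace ℝ (Fin n)) (hu : ‖u‖ = 1) (ht : ‖t‖ = 1)
    (hut : ⟪u, t⟫ = 0)
    (hxK : x ∈ K) (hx : ⟪x, u⟫ = supp K u)
    (hyK : y ∈ K) (hy : ⟪y, -u⟫ = supp K (-u)) :
    Filter.limsup (fun w => (supp K w - ⟪x, w⟫) / (1 - ⟪u, w⟫))
        (nhdsWithin u {w : EuclideanSpace ℝ (Fin n) | ‖w‖ = 1 ∧ 0 < ⟪w, t⟫}) +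
      Filter.liminf (fun w => (supp K w - ⟪y, w⟫) / (1 - ⟪-u, w⟫))
        (nhdsWithin (-u) {w : EuclideanSpace ℝ (Fin n) | ‖w‖ = 1 ∧ 0 < ⟪w, -t⟫}) = 1 := by
  obtain rfl := eq_sub_of_supp_eq hKc hwidth hu hxK hx hyK hy
  set S := {w : EuclideanSpace ℝ (Fin n) | ‖w‖ = 1 ∧ 0 < ⟪w, t⟫}
  have hneg : {w : EuclideanSpace ℝ (Fin n) | ‖w‖ = 1 ∧ 0 < ⟪w, -t⟫} = -S := by
    ext w; simp [S, inner_neg_right]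
  have hden : ∀ w ∈ S, 0 < 1 - ⟪u, w⟫ := fun w hw => sub_pos.mpr <|
    (inner_lt_one_iff_real_of_norm_eq_one hu hw.1).mpr fun h => by subst h; exact hw.2.ne' hut
  have : (𝓝[S] u).NeBot :=
    mem_closure_iff_nhdsWithin_neBot.mp (mem_closure_sphere_inter_inner_pos hu ht hut)
  have hbdd : ∀ᶠ w in 𝓝[S] u, 0 ≤ radiusQuotient K x u w ∧ radiusQuotient K x u w ≤ 1 :=
    eventually_nhdsWithin_of_forall fun w hw =>
      ⟨radiusQuotient_nonneg hKc hxK (hden w hw).le,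
        radiusQuotient_le_one hKc hwidth hyK hw.1 (hden w hw).le⟩
  have hflip : ∀ᶠ w in 𝓝[S] u,
      radiusQuotient K (x - u) (-u) (-w) = 1 - radiusQuotient K x u w :=
    eventually_nhdsWithin_of_forall fun w hw => radiusQuotient_neg hwidth hw.1 (hden w hw).ne'
  change limsup (radiusQuotient K x u) (𝓝[S] u) +
    liminf (radiusQuotient K (x - u) (-u)) (𝓝[{w | ‖w‖ = 1 ∧ 0 < ⟪w, -t⟫}] (-u)) = 1
  rw [hneg, ← map_neg_nhdsWithin, ← liminf_comp, Function.comp_def, liminf_congr hflip,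
    liminf_const_sub _ _ _ ⟨1, hbdd.mono fun _ h => h.2⟩
      (IsBoundedUnder.isCoboundedUnder_le ⟨0, hbdd.mono fun _ h => h.1⟩)]
  ring

theorem tangential_radii_sum_one {n : ℕ} (K : Set (EuclideanSpace ℝ (Fin n)))
    (hKc : IsCompact K) (hKconv : Convex ℝ K) (hKne : K.Nonempty)
    (hwidth : ∀ v : EuclideanSpace ℝ (Fin n), ‖v‖ = 1 → supp K v + supp K (-v) = 1)
    (u t x y : EuclideanSpace ℝ (Fin n)) (hu : ‖u‖ = 1) (ht : ‖t‖ = 1)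
    (hut : ⟪u, t⟫ = 0)
    (hxK : x ∈ K) (hx : ⟪x, u⟫ = supp K u)
    (hyK : y ∈ K) (hy : ⟪y, -u⟫ = supp K (-u)) :
    Filter.limsup (fun w => (supp K w - ⟪x, w⟫) / (1 - ⟪u, w⟫))
        (nhdsWithin u {w : EuclideanSpace ℝ (Fin n) | ‖w‖ = 1 ∧ 0 < ⟪w, t⟫}) +
      Filter.liminf (fun w => (supp K w - ⟪y, w⟫) / (1 - ⟪-u, w⟫))
        (nhdsWithin (-u) {w : EuclideanSpace ℝ (Fin n) | ‖w‖ = 1 ∧ 0 < ⟪w, -t⟫}) = 1 :=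
  tangential_radii_sum_one_general K hKc hwidth u t x y hu ht hut hxK hx hyK hy
end

section
/- Let K_i (i ∈ ℕ) and K be convex bodies in ℝⁿ with o ∈ int K and o ∈ K_i for all i. If the radial functions converge pointwise on the unit sphere, lim_{i→∞} ρ(K_i,u) = ρ(K,u) for all unit u, then the support functions converge pointwise: lim_{i→∞} h(K_i,u) = h(K,u) for all unit u. -/
open scoped RealInnerProductSpace
open Metric Filter

noncomputable def radial {n : ℕ} (K : Set (EuclideanSpace ℝ (Fin n)))
    (u : EuclideanSpace ℝ (Fin n)) : ℝ :=
  sSup {l : ℝ | 0 ≤ l ∧ l • u ∈ K}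

section Aux

variable {n : ℕ} {C : Set (EuclideanSpace ℝ (Fin n))} {u x : EuclideanSpace ℝ (Fin n)}
  {l c M : ℝ}

lemma bddAbove_radialSet (hC : IsCompact C) (hu : ‖u‖ = 1) :
    BddAbove {l : ℝ | 0 ≤ l ∧ l • u ∈ C} := by
  obtain ⟨M, hM⟩ := hC.isBounded.subset_closedBall 0
  refine ⟨M, fun l hl => ?_⟩
  have h1 := hM hl.2
  rw [mem_closedBall, dist_zero_right, norm_smul, hu, mul_one, Real.norm_eq_abs,
    abs_of_nonneg hl.1] at h1
  exact h1

lemma le_radial (hC : IsCompact C) (hu : ‖u‖ = 1) (hl : 0 ≤ l) (hm : l • u ∈ C) :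
    l ≤ radial C u :=
  le_csSup (bddAbove_radialSet hC hu) ⟨hl, hm⟩

lemma radial_nonneg (hC : IsCompact C) (hu : ‖u‖ = 1)
    (h0 : (0 : EuclideanSpace ℝ (Fin n)) ∈ C) : 0 ≤ radial C u :=
  le_radial hC hu le_rfl (by simpa using h0)

lemma radial_smul_mem (hC : IsCompact C) (hu : ‖u‖ = 1)
    (h0 : (0 : EuclideanSpace ℝ (Fin n)) ∈ C) : radial C u • u ∈ C := by
  have hcl : IsClosed {l : ℝ | 0 ≤ l ∧ l • u ∈ C} := by
    have heq : {l : ℝ | 0 ≤ l ∧ l • u ∈ C} = Set.Ici 0 ∩ (fun l : ℝ => l • u) ⁻¹' C := by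
      ext l; simp [Set.mem_Ici]
    rw [heq]
    exact isClosed_Ici.inter (hC.isClosed.preimage (continuous_id.smul continuous_const))
  obtain ⟨M, hM⟩ := bddAbove_radialSet hC hu
  have hcp : IsCompact {l : ℝ | 0 ≤ l ∧ l • u ∈ C} :=
    isCompact_Icc.of_isClosed_subset hcl (fun l hl => ⟨hl.1, hM hl⟩)
  have := hcp.sSup_mem ⟨0, le_rfl, by simpa using h0⟩
  exact this.2

lemma radial_le (hC : IsCompact C) (hu : ‖u‖ = 1) (h0 : (0 : EuclideanSpace ℝ (Fin n)) ∈ C)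
    (hM : C ⊆ closedBall 0 M) : radial C u ≤ M := by
  refine csSup_le ⟨0, le_rfl, by simpa using h0⟩ fun l hl => ?_
  have h1 := hM hl.2
  rw [mem_closedBall, dist_zero_right, norm_smul, hu, mul_one, Real.norm_eq_abs,
    abs_of_nonneg hl.1] at h1
  exact h1

lemma smul_mem_of_le_radial (hC : IsCompact C) (hconv : Convex ℝ C) (hu : ‖u‖ = 1)
    (h0 : (0 : EuclideanSpace ℝ (Fin n)) ∈ C) (hl0 : 0 ≤ l) (hl : l ≤ radial C u) :
    l • u ∈ C := by
  have hmem := radial_smul_mem hC hu h0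
  set p := radial C u with hp
  have hp0 : 0 ≤ p := hl0.trans hl
  rcases eq_or_lt_of_le hp0 with h | h
  · have : l = 0 := le_antisymm (hl.trans h.symm.le) hl0
    simpa [this] using h0
  · have key : l • u = (l / p) • (p • u) + (1 - l / p) • (0 : EuclideanSpace ℝ (Fin n)) := by
      rw [smul_zero, add_zero, smul_smul, div_mul_cancel₀ _ h.ne']
    rw [key]
    exact hconv hmem h0 (div_nonneg hl0 hp0)
      (by have := div_le_one_of_le₀ hl hp0; linarith) (by ring)

lemma inner_continuous : Continuous fun x : EuclideanSpace ℝ (Fin n) => ⟪x, u⟫ :=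
  continuous_id.inner continuous_const

lemma inner_le_supp_s9 (hC : IsCompact C) (hx : x ∈ C) : ⟪x, u⟫ ≤ supp C u :=
  le_csSup (hC.image inner_continuous).bddAbove ⟨x, hx, rfl⟩

lemma supp_le (h0 : C.Nonempty) (h : ∀ x ∈ C, ⟪x, u⟫ ≤ c) : supp C u ≤ c := by
  refine csSup_le (h0.image _) ?_
  rintro _ ⟨x, hx, rfl⟩
  exact h x hx

lemma exists_supp (hC : IsCompact C) (h0 : C.Nonempty) : ∃ x ∈ C, ⟪x, u⟫ = supp C u := by
  have := (hC.image (inner_continuous (u := u))).sSup_mem (h0.image _)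
  obtain ⟨x, hx, hx2⟩ := this
  exact ⟨x, hx, hx2⟩

lemma exists_unit_sep (hcl : IsClosed C) (hconv : Convex ℝ C)
    (h0 : (0 : EuclideanSpace ℝ (Fin n)) ∈ C) {y : EuclideanSpace ℝ (Fin n)} (hy : y ∉ C) :
    ∃ w : EuclideanSpace ℝ (Fin n), ‖w‖ = 1 ∧ ∀ a ∈ C, ⟪a, w⟫ < ⟪y, w⟫ := by
  obtain ⟨f, c, hfa, hfy⟩ := geometric_hahn_banach_closed_point hconv hcl hy
  set z := (InnerProductSpace.toDual ℝ (EuclideanSpace ℝ (Fin n))).symm f with hz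
  have hzf : ∀ x, ⟪z, x⟫ = f x := fun x => InnerProductSpace.toDual_symm_apply
  have hfy0 : 0 < f y := by
    have := hfa 0 h0
    simp only [map_zero] at this
    linarith
  have hz0 : z ≠ 0 := by
    intro h
    rw [← hzf y, h, inner_zero_left] at hfy0
    exact lt_irrefl _ hfy0
  have hzn : 0 < ‖z‖ := norm_pos_iff.2 hz0
  refine ⟨‖z‖⁻¹ • z, ?_, fun a ha => ?_⟩
  · rw [norm_smul, norm_inv, norm_norm, inv_mul_cancel₀ hzn.ne']
  · rw [real_inner_smul_right, real_inner_smul_right, real_inner_comm z a,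
      real_inner_comm z y, hzf, hzf]
    have h1 := hfa a ha
    have := inv_pos.2 hzn
    nlinarith

lemma exists_net {δ : ℝ} (hδ : 0 < δ) :
    ∃ W : Set (EuclideanSpace ℝ (Fin n)), W.Finite ∧ (∀ w ∈ W, ‖w‖ = 1) ∧
      ∀ v : EuclideanSpace ℝ (Fin n), ‖v‖ = 1 → ∃ w ∈ W, ‖v - w‖ ≤ δ := by
  have hcs : IsCompact (sphere (0 : EuclideanSpace ℝ (Fin n)) 1) := isCompact_sphere _ _
  have htb := hcs.totallyBounded
  rw [totallyBounded_iff_subset] at htb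
  obtain ⟨W, hWs, hWfin, hWcov⟩ := htb {p | dist p.1 p.2 < δ} (dist_mem_uniformity hδ)
  refine ⟨W, hWfin, fun w hw => by simpa using hWs hw, fun v hv => ?_⟩
  have : v ∈ sphere (0 : EuclideanSpace ℝ (Fin n)) 1 := by simpa using hv
  obtain ⟨w, hw, hvw⟩ := Set.mem_iUnion₂.1 (hWcov this)
  exact ⟨w, hw, by rw [← dist_eq_norm]; exact le_of_lt hvw⟩

end Aux

set_option maxHeartbeats 1000000 in
theorem radial_convergence_implies_support_convergence {n : ℕ}
    (K : Set (EuclideanSpace ℝ (Fin n))) (Ki : ℕ → Set (EuclideanSpace ℝ (Fin n)))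
    (hKc : IsCompact K) (hKconv : Convex ℝ K) (hKint : (0 : EuclideanSpace ℝ (Fin n)) ∈ interior K)
    (hKic : ∀ i, IsCompact (Ki i)) (hKiconv : ∀ i, Convex ℝ (Ki i))
    (hKio : ∀ i, (0 : EuclideanSpace ℝ (Fin n)) ∈ Ki i)
    (hconv : ∀ u : EuclideanSpace ℝ (Fin n), ‖u‖ = 1 →
      Tendsto (fun i => radial (Ki i) u) atTop (nhds (radial K u))) :
    ∀ u : EuclideanSpace ℝ (Fin n), ‖u‖ = 1 →
      Tendsto (fun i => supp (Ki i) u) atTop (nhds (supp K u)) := by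
  have h0K : (0 : EuclideanSpace ℝ (Fin n)) ∈ K := interior_subset hKint
  intro u hu
  rw [Metric.tendsto_nhds]
  intro ε hε
  obtain ⟨r0, hr0, hball0⟩ := Metric.isOpen_iff.1 isOpen_interior 0 hKint
  set r := r0 / 2 with hrdef
  have hr : 0 < r := by rw [hrdef]; linarith only [hr0]
  have hrK : closedBall (0 : EuclideanSpace ℝ (Fin n)) r ⊆ K :=
    (closedBall_subset_ball (by rw [hrdef]; linarith only [hr0])).trans
      (hball0.trans interior_subset)
  obtain ⟨R, hR⟩ := hKc.isBounded.subset_closedBall 0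
  have hsmul_ball : ∀ w : EuclideanSpace ℝ (Fin n), ‖w‖ = 1 → ∀ s : ℝ, 0 ≤ s →
      s • w ∈ closedBall (0 : EuclideanSpace ℝ (Fin n)) s := by
    intro w hw s hs
    rw [mem_closedBall, dist_zero_right, norm_smul, hw, mul_one, Real.norm_eq_abs,
      abs_of_nonneg hs]
  have hrR : r ≤ R := by
    have := hR (hrK (hsmul_ball u hu r hr.le))
    rw [mem_closedBall, dist_zero_right, norm_smul, hu, mul_one, Real.norm_eq_abs,
      abs_of_nonneg hr.le] at this
    exact this
  have hrh : r ≤ supp K u := by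
    have hmem : r • u ∈ K := hrK (hsmul_ball u hu r hr.le)
    have := inner_le_supp_s9 (u := u) hKc hmem
    rwa [real_inner_smul_left, real_inner_self_eq_norm_mul_norm, hu, mul_one, mul_one] at this
  have hhR : supp K u ≤ R := by
    refine supp_le ⟨0, h0K⟩ fun x hx => ?_
    have h1 := real_inner_le_norm x u
    have h2 := hR hx
    rw [mem_closedBall, dist_zero_right] at h2
    rw [hu, mul_one] at h1
    linarith only [h1, h2]
  -- lower bound
  have lower : ∀ᶠ i in atTop, supp K u - ε / 2 ≤ supp (Ki i) u := by
    obtain ⟨x, hxK, hxval⟩ := exists_supp hKc ⟨0, h0K⟩ (u := u)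
    have hx0 : x ≠ 0 := by
      rintro rfl
      rw [inner_zero_left] at hxval
      linarith only [hxval, hrh, hr]
    have hm0 : 0 < ‖x‖ := norm_pos_iff.2 hx0
    set v := ‖x‖⁻¹ • x with hv
    have hv1 : ‖v‖ = 1 := by rw [hv, norm_smul, norm_inv, norm_norm, inv_mul_cancel₀ hm0.ne']
    have hmv : ‖x‖ • v = x := by rw [hv, smul_smul, mul_inv_cancel₀ hm0.ne', one_smul]
    have hrad : ‖x‖ ≤ radial K v := le_radial hKc hv1 hm0.le (by rw [hmv]; exact hxK)
    have hvu : ⟪v, u⟫ = ‖x‖⁻¹ * supp K u := by rw [hv, real_inner_smul_left, hxval]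
    have hlim := (hconv v hv1).mul_const (‖x‖⁻¹ * supp K u)
    have hgt : supp K u - ε / 2 < radial K v * (‖x‖⁻¹ * supp K u) := by
      have h1 : ‖x‖ * (‖x‖⁻¹ * supp K u) = supp K u := by field_simp
      have h2 : 0 ≤ ‖x‖⁻¹ * supp K u :=
        mul_nonneg (inv_nonneg.2 hm0.le) (by linarith only [hrh, hr])
      have h3 := mul_le_mul_of_nonneg_right hrad h2
      linarith only [h1, h3, hε]
    filter_upwards [hlim.eventually (eventually_gt_nhds hgt)] with i hi
    have hmem : radial (Ki i) v • v ∈ Ki i := radial_smul_mem (hKic i) hv1 (hKio i)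
    have h2 := inner_le_supp_s9 (hKic i) hmem (u := u)
    rw [real_inner_smul_left, hvu] at h2
    linarith only [h2, hi]
  -- upper bound
  set r₁ := r / 4 with hr₁def
  have hr₁0 : 0 < r₁ := by rw [hr₁def]; linarith only [hr]
  set M := 2 * (R + 1) with hMdef
  have hM0 : 0 < M := by rw [hMdef]; linarith only [hrR, hr]
  set η := min 1 (min (r / 2) (ε / 8)) with hηdef
  have hη0 : 0 < η := by
    rw [hηdef]
    exact lt_min one_pos (lt_min (by linarith only [hr]) (by linarith only [hε]))
  have hη1 : η ≤ 1 := min_le_left _ _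
  have hηr : η ≤ r / 2 := (min_le_right _ _).trans (min_le_left _ _)
  have hηε : η ≤ ε / 8 := (min_le_right _ _).trans (min_le_right _ _)
  set δ := min 1 (min (r₁ / (2 * (R + 1))) (min (ε / (8 * M)) (ε * r₁ / (8 * M ^ 2)))) with hδdef
  have hM2 : (0:ℝ) < 8 * M ^ 2 := by nlinarith only [hM0]
  have hδ0 : 0 < δ := by
    rw [hδdef]
    refine lt_min one_pos (lt_min (div_pos hr₁0 (by linarith only [hM0, hMdef]))
      (lt_min (div_pos hε (by linarith only [hM0])) (div_pos (mul_pos hε hr₁0) hM2)))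
  have hδ1 : δ ≤ 1 := min_le_left _ _
  have hδa : δ * (2 * (R + 1)) ≤ r₁ := by
    have h1 : δ ≤ r₁ / (2 * (R + 1)) := (min_le_right _ _).trans (min_le_left _ _)
    exact (le_div_iff₀ (by linarith only [hM0, hMdef])).1 h1
  have hδb : δ * (8 * M) ≤ ε := by
    have h1 : δ ≤ ε / (8 * M) :=
      (min_le_right _ _).trans ((min_le_right _ _).trans (min_le_left _ _))
    exact (le_div_iff₀ (by linarith only [hM0])).1 h1
  have hδc : δ * (8 * M ^ 2) ≤ ε * r₁ := by
    have h1 : δ ≤ ε * r₁ / (8 * M ^ 2) :=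
      (min_le_right _ _).trans ((min_le_right _ _).trans (min_le_right _ _))
    exact (le_div_iff₀ hM2).1 h1
  obtain ⟨W, hWfin, hWsph, hWnet⟩ := exists_net (n := n) hδ0
  have hev : ∀ᶠ i in atTop, ∀ w ∈ W, |radial (Ki i) w - radial K w| < η := by
    rw [eventually_all_finite hWfin]
    intro w hw
    have := Metric.tendsto_nhds.1 (hconv w (hWsph w hw)) η hη0
    simpa [Real.dist_eq] using this
  have upper : ∀ᶠ i in atTop, supp (Ki i) u ≤ supp K u + ε / 2 := by
    filter_upwards [hev] with i hi
    -- step B: the ball of radius r₁ is contained in Ki i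
    have hball : closedBall (0 : EuclideanSpace ℝ (Fin n)) r₁ ⊆ Ki i := by
      intro y hy
      by_contra hyn
      obtain ⟨w', hw'1, hsep⟩ := exists_unit_sep (hKic i).isClosed (hKiconv i) (hKio i) hyn
      obtain ⟨w, hwW, hwd⟩ := hWnet w' hw'1
      have hw1 := hWsph w hwW
      have h1 : radial K w - η < radial (Ki i) w := by
        have := hi w hwW
        rw [abs_lt] at this
        linarith only [this.1]
      have h2 : r ≤ radial K w := le_radial hKc hw1 hr.le (hrK (hsmul_ball w hw1 r hr.le))
      have h3 : (r - η) • w ∈ Ki i :=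
        smul_mem_of_le_radial (hKic i) (hKiconv i) hw1 (hKio i) (by linarith only [h1, h2, hηr, hr])
          (by linarith only [h1, h2])
      have h4 := hsep _ h3
      rw [real_inner_smul_left] at h4
      have hip : 1 - δ ^ 2 / 2 ≤ ⟪w, w'⟫ := by
        have hns := norm_sub_sq_real w w'
        have hn : ‖w - w'‖ ≤ δ := by rw [norm_sub_rev]; exact hwd
        have hn2 : ‖w - w'‖ ^ 2 ≤ δ ^ 2 := by
          nlinarith only [hn, norm_nonneg (w - w')]
        rw [hw1, hw'1] at hns
        linarith only [hns, hn2]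
      have hyn2 : ⟪y, w'⟫ ≤ r₁ := by
        have h5 := real_inner_le_norm y w'
        rw [hw'1, mul_one] at h5
        rw [mem_closedBall, dist_zero_right] at hy
        linarith only [h5, hy]
      have h6 : (0:ℝ) ≤ r - η := by linarith only [hηr, hr]
      have hδsq : δ ^ 2 ≤ 1 := by nlinarith only [hδ0, hδ1]
      have hA : r / 4 ≤ (r - η) * (1 - δ ^ 2 / 2) := by nlinarith only [hηr, hδsq, hr, hδ0]
      have hB := mul_le_mul_of_nonneg_left hip h6
      have hC : r₁ = r / 4 := hr₁def
      linarith only [hA, hB, h4, hyn2, hC]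
    -- step C/D: every point of Ki i has inner product with u at most supp K u + ε/2
    refine supp_le ⟨0, hKio i⟩ fun x hx => ?_
    rcases eq_or_ne x 0 with rfl | hx0
    · rw [inner_zero_left]; linarith only [hrh, hr, hε]
    have hm0 : 0 < ‖x‖ := norm_pos_iff.2 hx0
    set m := ‖x‖ with hmdef
    set v := m⁻¹ • x with hv
    have hv1 : ‖v‖ = 1 := by
      rw [hv, norm_smul, norm_inv, hmdef, norm_norm, inv_mul_cancel₀ hm0.ne']
    have hmv : m • v = x := by rw [hv, smul_smul, mul_inv_cancel₀ hm0.ne', one_smul]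
    obtain ⟨w, hwW, hwd⟩ := hWnet v hv1
    have hw1 := hWsph w hwW
    set t := m * δ / (r₁ + m * δ) with htdef
    have hden : 0 < r₁ + m * δ := by linarith only [hr₁0, mul_pos hm0 hδ0]
    have ht0 : 0 < t := by rw [htdef]; exact div_pos (mul_pos hm0 hδ0) hden
    have ht' : t * (r₁ + m * δ) = m * δ := by
      rw [htdef, div_mul_cancel₀ _ hden.ne']
    have h1t : (1 - t) * (r₁ + m * δ) = r₁ := by linear_combination -ht'
    have h1t0 : 0 < 1 - t := by nlinarith only [h1t, hden, hr₁0]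
    have heq : (1 - t) * (m * δ) = t * r₁ := by linear_combination h1t
    -- cone point
    have hcone : ((1 - t) * m) • w ∈ Ki i := by
      have hsub : ((1 - t) * m) • w - (1 - t) • x = ((1 - t) * m) • (w - v) := by
        rw [smul_sub]
        congr 1
        rw [← hmv, smul_smul]
      set b := t⁻¹ • (((1 - t) * m) • w - (1 - t) • x) with hb
      have hnwv : ‖w - v‖ ≤ δ := by rw [norm_sub_rev]; exact hwd
      have hbnorm : ‖b‖ ≤ r₁ := by
        rw [hb, hsub, norm_smul, norm_smul, norm_inv, Real.norm_eq_abs, abs_of_pos ht0,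
          Real.norm_eq_abs, abs_of_nonneg (mul_nonneg h1t0.le hm0.le)]
        calc t⁻¹ * ((1 - t) * m * ‖w - v‖) ≤ t⁻¹ * ((1 - t) * (m * δ)) := by
              refine mul_le_mul_of_nonneg_left ?_ (inv_nonneg.2 ht0.le)
              have := mul_le_mul_of_nonneg_left hnwv (mul_nonneg h1t0.le hm0.le)
              linarith only [this]
          _ = t⁻¹ * (t * r₁) := by rw [heq]
          _ = r₁ := by rw [inv_mul_cancel_left₀ ht0.ne']
      have hbmem : b ∈ Ki i := hball (by rw [mem_closedBall, dist_zero_right]; exact hbnorm)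
      have hrepr : ((1 - t) * m) • w = (1 - t) • x + t • b := by
        rw [hb, smul_smul, mul_inv_cancel₀ ht0.ne', one_smul]
        abel
      rw [hrepr]
      exact (hKiconv i) hx hbmem h1t0.le ht0.le (by ring)
    have hradw : (1 - t) * m ≤ radial (Ki i) w :=
      le_radial (hKic i) hw1 (mul_nonneg h1t0.le hm0.le) hcone
    have hKiw : radial (Ki i) w < radial K w + η := by
      have := hi w hwW
      rw [abs_lt] at this
      linarith only [this.2]
    have hKwR : radial K w ≤ R := radial_le hKc hw1 h0K hR
    have hKw0 : 0 ≤ radial K w := radial_nonneg hKc hw1 h0K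
    -- bound m ≤ M
    have hmM : m ≤ M := by
      have h6 : (1 - t) * m ≤ R + 1 := by linarith only [hradw, hKiw, hKwR, hη1]
      have h7 : r₁ * m ≤ (R + 1) * (r₁ + m * δ) := by
        have h5 : (1 - t) * m * (r₁ + m * δ) = r₁ * m := by linear_combination m * h1t
        rw [← h5]
        exact mul_le_mul_of_nonneg_right h6 hden.le
      have h8 : m * (δ * (2 * (R + 1))) ≤ m * r₁ := mul_le_mul_of_nonneg_left hδa hm0.le
      have h9 : m ≤ 2 * (R + 1) := by nlinarith only [h7, h8, hr₁0]
      linarith only [h9, hMdef.ge]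
    -- final estimate
    have hvu2 : ⟪v, u⟫ ≤ ⟪w, u⟫ + δ := by
      have h9 := real_inner_le_norm (v - w) u
      rw [inner_sub_left, hu, mul_one] at h9
      linarith only [h9, hwd]
    have hxu : ⟪x, u⟫ = m * ⟪v, u⟫ := by rw [← hmv, real_inner_smul_left]
    have e6 : m * δ ≤ ε / 8 := by nlinarith only [hmM, hδb, hδ0, hm0, hM0]
    rcases le_or_gt ⟪w, u⟫ 0 with hwu | hwu
    · have h10 : m * ⟪v, u⟫ ≤ m * δ := by nlinarith only [hvu2, hwu, hm0]
      linarith only [hxu, h10, e6, hrh, hr, hε]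
    · have hKmem : radial K w • w ∈ K := radial_smul_mem hKc hw1 h0K
      have hKh := inner_le_supp_s9 hKc hKmem (u := u)
      rw [real_inner_smul_left] at hKh
      have hwu1 : ⟪w, u⟫ ≤ 1 := by
        have := real_inner_le_norm w u
        rw [hw1, hu] at this
        linarith only [this]
      have e1 : m * ⟪v, u⟫ ≤ m * ⟪w, u⟫ + m * δ := by nlinarith only [hvu2, hm0]
      have e2 : (1 - t) * m * ⟪w, u⟫ ≤ supp K u + η := by
        nlinarith only [hradw, hKiw, hKh, hwu, hwu1, hη0]
      have e4 : t * m * ⟪w, u⟫ ≤ t * m := by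
        nlinarith only [mul_nonneg (mul_nonneg ht0.le hm0.le) (sub_nonneg.2 hwu1)]
      have e5 : t * m ≤ ε / 8 := by
        have htr : t * r₁ ≤ m * δ := by
          nlinarith only [ht', mul_nonneg (mul_nonneg ht0.le hm0.le) hδ0.le]
        have h11 : t * m * r₁ ≤ m * m * δ := by nlinarith only [htr, hm0]
        have h12 : m * m * δ ≤ M * M * δ := by
          nlinarith only [mul_nonneg (mul_nonneg (sub_nonneg.2 hmM) hδ0.le)
            (by linarith only [hmM, hm0] : (0:ℝ) ≤ M + m)]
        have h13 : M * M * δ * 8 ≤ ε * r₁ := by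
          have hh : M * M * δ * 8 = δ * (8 * M ^ 2) := by ring
          linarith only [hδc, hh]
        nlinarith only [h11, h12, h13, hr₁0]
      have e3 : m * ⟪w, u⟫ = (1 - t) * m * ⟪w, u⟫ + t * m * ⟪w, u⟫ := by ring
      rw [hxu]
      linarith only [e1, e2, e3, e4, e5, e6, hηε, hε]
  filter_upwards [lower, upper] with i h1 h2
  rw [Real.dist_eq, abs_lt]
  constructor <;> linarith only [h1, h2, hε]
end

section
/- Let 0 < r < 1, let B_r = B(c, r) be a ball of radius r in ℝⁿ, y ∈ ∂B_r, and v a unit vector tangent to B_r at y (i.e., ⟨v, y − c⟩ = 0). Then there exists α(r) > 0, depending only on r, such that for every unit ball B(z,1) with B_r ⊆ B(z,1) and every λ with 0 < λ ≤ α(r) and y + λv ∈ ∂B(z,1), the outer unit normal u₁ = y + λv − z of B(z,1) at y + λv satisfies ⟨v, u₁⟩ ≤ 1/4. -/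
open scoped RealInnerProductSpace
open Metric

set_option maxHeartbeats 1000000 in
lemma key_real (r lam s a b : ℝ) (hr : 0 < r) (hr1 : r < 1) (hl : 0 < lam)
    (hla : lam ≤ r*(1-r)/200) (has : a ≤ s) (hs : s ≤ 1 - r) (hs0 : 0 ≤ s)
    (hbessel : r^2*a^2 + b^2 ≤ r^2*s^2)
    (heq : r^2 + lam^2 + s^2 + 2*b + 2*lam*a = 1) : lam + a ≤ 1/4 := by
  have h1r : 0 < 1 - r := sub_pos.mpr hr1
  have hR : 0 < r * (1-r) := mul_pos hr h1r
  have hR4 : r * (1-r) ≤ 1/4 := by nlinarith [sq_nonneg (r - 1/2)]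
  have hs2 : s^2 ≤ (1-r)^2 := pow_le_pow_left₀ hs0 hs 2
  have hla1 : lam ≤ 1 := by nlinarith
  have hlaa : lam * a ≤ lam * (1-r) := mul_le_mul_of_nonneg_left (has.trans hs) hl.le
  set d : ℝ := (lam^2 + 2*lam*(1-r))/2 with hd_def
  have hb : r*(1-r) - d ≤ b := by
    have : 2*b = 1 - r^2 - lam^2 - s^2 - 2*lam*a := by linarith
    nlinarith
  have hd : d ≤ 3*(r*(1-r))/400 := by
    have h2 : lam^2 ≤ lam := by nlinarith
    have : d ≤ 3*lam/2 := by
      rw [hd_def]; nlinarith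
    linarith
  have hRd : 0 ≤ r*(1-r) - d := by linarith
  have hbsq : (r*(1-r) - d)^2 ≤ b^2 := pow_le_pow_left₀ hRd hb 2
  have hss : r^2*s^2 ≤ r^2*(1-r)^2 := mul_le_mul_of_nonneg_left hs2 (sq_nonneg r)
  have ha2' : r^2*a^2 ≤ 2*(r*(1-r))*d := by nlinarith [sq_nonneg d]
  have ha2 : a^2 ≤ 6*(1-r)^2/400 := by
    have h7 : 2*(r*(1-r))*d ≤ 2*(r*(1-r))*(3*(r*(1-r))/400) :=
      mul_le_mul_of_nonneg_left hd (by positivity)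
    have h8 : 2*(r*(1-r))*(3*(r*(1-r))/400) = r^2 * (6*(1-r)^2/400) := by ring
    have h6 : r^2 * a^2 ≤ r^2 * (6*(1-r)^2/400) := by linarith
    exact le_of_mul_le_mul_left h6 (by positivity)
  have h9 : a^2 ≤ 6/400 := by nlinarith [sq_nonneg r]
  have ha : a ≤ 1/8 := by nlinarith [sq_nonneg (a - 1/8)]
  linarith

lemma bessel_two {E : Type*} [NormedAddCommGroup E] [InnerProductSpace ℝ E]
    (v e w : E) (hv : ‖v‖ = 1) (hve : ⟪v, e⟫ = 0) :
    ‖e‖^2 * ⟪v, w⟫^2 + ⟪e, w⟫^2 ≤ ‖e‖^2 * ‖w‖^2 := by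
  have hev : ⟪e, v⟫ = 0 := by rw [real_inner_comm]; exact hve
  rcases eq_or_ne e 0 with rfl | he0
  · simp
  · have hne : (0:ℝ) < ‖e‖ := norm_pos_iff.mpr he0
    have ht : (0:ℝ) < ‖e‖^2 := by positivity
    have h0 : (0:ℝ) ≤ ⟪(‖e‖^2) • w - (‖e‖^2 * ⟪v, w⟫) • v - ⟪e, w⟫ • e,
        (‖e‖^2) • w - (‖e‖^2 * ⟪v, w⟫) • v - ⟪e, w⟫ • e⟫ := real_inner_self_nonneg
    simp only [inner_sub_left, inner_sub_right, real_inner_smul_left, real_inner_smul_right] at h0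
    simp only [real_inner_self_eq_norm_sq, hve, hev, hv] at h0
    rw [real_inner_comm v w, real_inner_comm e w] at h0
    nlinarith [h0, ht]

theorem tangent_point_normal_almost_orthogonal {n : ℕ} (r : ℝ) (hr : 0 < r) (hr1 : r < 1) :
    ∃ α > 0, ∀ (c y v z : EuclideanSpace ℝ (Fin n)) (lam : ℝ),
      ‖y - c‖ = r → ‖v‖ = 1 → ⟪v, y - c⟫ = 0 →
      closedBall c r ⊆ closedBall z 1 →
      0 < lam → lam ≤ α → ‖y + lam • v - z‖ = 1 →
      ⟪v, y + lam • v - z⟫ ≤ 1 / 4 := by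
  have h1r : 0 < 1 - r := by linarith
  refine ⟨r*(1-r)/200, by positivity, ?_⟩
  intro c y v z lam hy hv hvy hsub hl hla hnorm
  -- bound on ‖c - z‖
  have hw : ‖c - z‖ + r ≤ 1 := by
    rcases eq_or_ne c z with rfl | hne
    · simp; linarith
    · have hpos : 0 < ‖c - z‖ := norm_pos_iff.mpr (sub_ne_zero_of_ne hne)
      have hu : c + (r/‖c-z‖) • (c - z) ∈ closedBall c r := by
        rw [mem_closedBall, dist_eq_norm]
        have : c + (r/‖c-z‖) • (c - z) - c = (r/‖c-z‖) • (c - z) := by abel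
        rw [this, norm_smul, Real.norm_eq_abs, abs_of_nonneg (by positivity)]
        rw [div_mul_cancel₀ _ hpos.ne']
      have h1 := hsub hu
      rw [mem_closedBall, dist_eq_norm] at h1
      have h2 : c + (r/‖c-z‖) • (c - z) - z = (1 + r/‖c-z‖) • (c - z) := by
        rw [add_smul, one_smul]; abel
      rw [h2, norm_smul, Real.norm_eq_abs, abs_of_nonneg (by positivity),
        add_mul, one_mul, div_mul_cancel₀ _ hpos.ne'] at h1
      linarith
  -- notation
  set e : EuclideanSpace ℝ (Fin n) := y - c with he_def
  set w : EuclideanSpace ℝ (Fin n) := c - z with hw_def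
  have hid : y + lam • v - z = (e + lam • v) + w := by rw [he_def, hw_def]; abel
  have hev : ⟪e, v⟫ = 0 := by rw [real_inner_comm]; exact hvy
  -- expansion of the norm
  have e1 : ‖(e + lam • v) + w‖^2 = ‖e + lam • v‖^2 + 2*⟪e + lam • v, w⟫ + ‖w‖^2 :=
    norm_add_sq_real _ _
  have e2 : ‖e + lam • v‖^2 = r^2 + lam^2 := by
    rw [norm_add_sq_real, real_inner_smul_right, hev, norm_smul, Real.norm_eq_abs, hy, hv]
    ring_nf
    rw [sq_abs]
  have e3 : ⟪e + lam • v, w⟫ = ⟪e, w⟫ + lam * ⟪v, w⟫ := by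
    rw [inner_add_left, real_inner_smul_left]
  have heq : r^2 + lam^2 + ‖w‖^2 + 2*⟪e,w⟫ + 2*lam*⟪v,w⟫ = 1 := by
    have h4 : ‖(e + lam • v) + w‖^2 = 1 := by rw [← hid, hnorm]; norm_num
    rw [e1, e2, e3] at h4; linarith
  -- bessel
  have hbes := bessel_two v e w hv hvy
  rw [hy] at hbes
  -- Cauchy-Schwarz
  have hcs : ⟪v, w⟫ ≤ ‖w‖ := by
    have := real_inner_le_norm v w
    rwa [hv, one_mul] at this
  -- conclude
  have hgoal : ⟪v, y + lam • v - z⟫ = lam + ⟪v, w⟫ := by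
    rw [hid, inner_add_right, inner_add_right, real_inner_smul_right, hvy,
      real_inner_self_eq_norm_sq, hv]
    ring
  rw [hgoal]
  exact key_real r lam ‖w‖ ⟪v, w⟫ ⟪e, w⟫ hr hr1 hl hla hcs (by linarith) (norm_nonneg _)
    hbes heq
end

section
/- Let K ⊆ ℝⁿ be a convex body and v a unit vector. Define Z⁺(K,v) = {x + λv : x ∈ K, λ ≥ 0} and β_v(K) = Z⁺(K,v) ∩ ⋂_{x∈K} B(x, d) where d = diam K. Then β_v(K) is a convex body containing K with diam β_v(K) = d. -/
/-!
Write two points of `β_v(K)` as `x + λ v` and `x' + λ' v` with `x, x' ∈ K` and `0 ≤ λ ≤ λ'`.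
Their distance is `dist x (x' + (λ' - λ) v)`, and `x' + (λ' - λ) v` lies on the segment from
`x' ∈ K` to `x' + λ' v ∈ β_v(K)`; both endpoints lie in the convex ball `B(x, d)`, hence so does
it. So `β_v(K)` has diameter `d`; in particular it is bounded, and it is closed because `Z⁺(K, v)`
is the sum of the compact set `K` and a closed ray.
-/

open Metric Set
open scoped Pointwise

section Module

variable {E : Type*} [AddCommGroup E] [Module ℝ E]

theorem Convex.add_smul_mem_of_le {s : Set E} (hs : Convex ℝ s) {x v : E} {t μ : ℝ}
    (hx : x ∈ s) (hxt : x + t • v ∈ s) (hμ : 0 ≤ μ) (hμt : μ ≤ t) : x + μ • v ∈ s := by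
  rcases hμ.eq_or_lt with rfl | hμ
  · rwa [zero_smul, add_zero]
  have ht : 0 < t := hμ.trans_le hμt
  have h := hs.add_smul_mem hx hxt ⟨div_nonneg hμ.le ht.le, (div_le_one ht).2 hμt⟩
  rwa [smul_smul, div_mul_cancel₀ μ ht.ne'] at h

/-- The half-cylinder `Z⁺(K, v)`. -/
def halfCylinder (K : Set E) (v : E) : Set E :=
  {y | ∃ x ∈ K, ∃ lam : ℝ, 0 ≤ lam ∧ y = x + lam • v}

variable {K : Set E} {v : E}

theorem halfCylinder_eq_add (K : Set E) (v : E) :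
    halfCylinder K v = K + (fun t : ℝ => t • v) '' Ici 0 := by
  ext y
  simp only [halfCylinder, mem_ofPred_eq, mem_add, mem_image, mem_Ici]
  constructor
  · rintro ⟨x, hx, lam, hlam, rfl⟩
    exact ⟨x, hx, lam • v, ⟨lam, hlam, rfl⟩, rfl⟩
  · rintro ⟨x, hx, _, ⟨lam, hlam, rfl⟩, rfl⟩
    exact ⟨x, hx, lam, hlam, rfl⟩

theorem subset_halfCylinder (K : Set E) (v : E) : K ⊆ halfCylinder K v :=
  fun x hx => ⟨x, hx, 0, le_rfl, by rw [zero_smul, add_zero]⟩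

theorem Convex.halfCylinder (hK : Convex ℝ K) (v : E) : Convex ℝ (halfCylinder K v) := by
  rw [halfCylinder_eq_add]
  exact hK.add ((convex_Ici 0).linear_image (LinearMap.smulRight LinearMap.id v))

end Module

section PseudoMetric

variable {α : Type*} [PseudoMetricSpace α]

def diamBallInter (K : Set α) : Set α :=
  ⋂ x ∈ K, closedBall x (diam K)

variable {K : Set α}

theorem mem_diamBallInter {y : α} : y ∈ diamBallInter K ↔ ∀ x ∈ K, dist y x ≤ diam K := by
  simp only [diamBallInter, mem_iInter₂, mem_closedBall]

theorem isClosed_diamBallInter (K : Set α) : IsClosed (diamBallInter K) :=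
  isClosed_biInter fun _ _ => isClosed_closedBall

theorem Bornology.IsBounded.subset_diamBallInter (hK : Bornology.IsBounded K) :
    K ⊆ diamBallInter K :=
  fun _ hy => mem_diamBallInter.2 fun _ hx => dist_le_diam_of_mem hK hy hx

end PseudoMetric

section Normed

variable {E : Type*} [NormedAddCommGroup E] [NormedSpace ℝ E]

/-- The cover `β_v(K)`. -/
def betaCover (K : Set E) (v : E) : Set E :=
  halfCylinder K v ∩ diamBallInter K

variable {K : Set E} {v : E}

theorem IsCompact.isClosed_halfCylinder [FiniteDimensional ℝ E] (hK : IsCompact K) (v : E) :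
    IsClosed (halfCylinder K v) := by
  rw [halfCylinder_eq_add]
  exact (isClosedMap_smul_left v _ isClosed_Ici).add_left_of_isCompact hK

theorem convex_diamBallInter (K : Set E) : Convex ℝ (diamBallInter K) :=
  convex_iInter₂ fun x _ => convex_closedBall x (diam K)

theorem Bornology.IsBounded.subset_betaCover (hK : Bornology.IsBounded K) (v : E) :
    K ⊆ betaCover K v :=
  subset_inter (subset_halfCylinder K v) hK.subset_diamBallInter

theorem dist_add_smul_le_diam (hK : Bornology.IsBounded K) {x x' : E} (hx : x ∈ K) (hx' : x' ∈ K)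
    {lam lam' : ℝ} (hlam : 0 ≤ lam) (hle : lam ≤ lam') (hy' : x' + lam' • v ∈ diamBallInter K) :
    dist (x + lam • v) (x' + lam' • v) ≤ diam K := by
  have hball : x' + (lam' - lam) • v ∈ closedBall x (diam K) :=
    (convex_closedBall x _).add_smul_mem_of_le
      (mem_closedBall.2 (dist_le_diam_of_mem hK hx' hx)) (mem_diamBallInter.1 hy' x hx)
      (sub_nonneg.2 hle) (sub_le_self _ hlam)
  calc dist (x + lam • v) (x' + lam' • v) = dist (x' + (lam' - lam) • v) x := by
        rw [dist_comm, dist_eq_norm, dist_eq_norm]; congr 1; module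
    _ ≤ diam K := mem_closedBall.1 hball

theorem dist_le_diam_of_mem_betaCover (hK : Bornology.IsBounded K) {y y' : E}
    (hy : y ∈ betaCover K v) (hy' : y' ∈ betaCover K v) : dist y y' ≤ diam K := by
  obtain ⟨⟨x, hx, lam, hlam, rfl⟩, hyT⟩ := hy
  obtain ⟨⟨x', hx', lam', hlam', rfl⟩, hy'T⟩ := hy'
  rcases le_total lam lam' with hle | hle
  · exact dist_add_smul_le_diam hK hx hx' hlam hle hy'T
  · rw [dist_comm]
    exact dist_add_smul_le_diam hK hx' hx hlam' hle hyT

theorem Bornology.IsBounded.betaCover (hK : Bornology.IsBounded K) (v : E) :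
    Bornology.IsBounded (betaCover K v) :=
  isBounded_iff.2 ⟨diam K, fun _ hy _ hy' => dist_le_diam_of_mem_betaCover hK hy hy'⟩

theorem diam_betaCover (hK : Bornology.IsBounded K) (v : E) : diam (betaCover K v) = diam K :=
  le_antisymm (diam_le_of_forall_dist_le diam_nonneg fun _ hy _ hy' =>
      dist_le_diam_of_mem_betaCover hK hy hy')
    (diam_mono (hK.subset_betaCover v) (hK.betaCover v))

theorem Convex.betaCover (hK : Convex ℝ K) (v : E) : Convex ℝ (betaCover K v) :=
  (hK.halfCylinder v).inter (convex_diamBallInter K)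

theorem IsCompact.betaCover [FiniteDimensional ℝ E] (hK : IsCompact K) (v : E) :
    IsCompact (betaCover K v) :=
  isCompact_of_isClosed_isBounded ((hK.isClosed_halfCylinder v).inter (isClosed_diamBallInter K))
    (hK.isBounded.betaCover v)

end Normed

theorem beta_v_tight_cover_general {n : ℕ} (K : Set (EuclideanSpace ℝ (Fin n)))
    (hKc : IsCompact K) (hKconv : Convex ℝ K)
    (v : EuclideanSpace ℝ (Fin n)) :
    IsCompact ({y | ∃ x ∈ K, ∃ lam : ℝ, 0 ≤ lam ∧ y = x + lam • v} ∩
        ⋂ x ∈ K, closedBall x (Metric.diam K)) ∧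
    Convex ℝ ({y | ∃ x ∈ K, ∃ lam : ℝ, 0 ≤ lam ∧ y = x + lam • v} ∩
        ⋂ x ∈ K, closedBall x (Metric.diam K)) ∧
    K ⊆ ({y | ∃ x ∈ K, ∃ lam : ℝ, 0 ≤ lam ∧ y = x + lam • v} ∩
        ⋂ x ∈ K, closedBall x (Metric.diam K)) ∧
    Metric.diam ({y | ∃ x ∈ K, ∃ lam : ℝ, 0 ≤ lam ∧ y = x + lam • v} ∩
        ⋂ x ∈ K, closedBall x (Metric.diam K)) = Metric.diam K := by
  exact ⟨hKc.betaCover v, hKconv.betaCover v, hKc.isBounded.subset_betaCover v,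
    diam_betaCover hKc.isBounded v⟩

theorem beta_v_tight_cover {n : ℕ} (K : Set (EuclideanSpace ℝ (Fin n)))
    (hKc : IsCompact K) (hKconv : Convex ℝ K) (hKne : K.Nonempty)
    (v : EuclideanSpace ℝ (Fin n)) (hv : ‖v‖ = 1) :
    IsCompact ({y | ∃ x ∈ K, ∃ lam : ℝ, 0 ≤ lam ∧ y = x + lam • v} ∩
        ⋂ x ∈ K, closedBall x (Metric.diam K)) ∧
    Convex ℝ ({y | ∃ x ∈ K, ∃ lam : ℝ, 0 ≤ lam ∧ y = x + lam • v} ∩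
        ⋂ x ∈ K, closedBall x (Metric.diam K)) ∧
    K ⊆ ({y | ∃ x ∈ K, ∃ lam : ℝ, 0 ≤ lam ∧ y = x + lam • v} ∩
        ⋂ x ∈ K, closedBall x (Metric.diam K)) ∧
    Metric.diam ({y | ∃ x ∈ K, ∃ lam : ℝ, 0 ≤ lam ∧ y = x + lam • v} ∩
        ⋂ x ∈ K, closedBall x (Metric.diam K)) = Metric.diam K :=
  beta_v_tight_cover_general K hKc hKconv v
end
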